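/- arXiv:2407.10383 — 2 statements merged into one kernel-verified Lean document; each statement's English description precedes it below -/
import Mathlib

section
/- The conflation of n independent normal random variables with means μᵢ and variances σᵢ² > 0 has density equal to the normal density with mean (Σᵢ μᵢ/σᵢ²)/(Σᵢ σᵢ⁻²) and variance 1/(Σᵢ σᵢ⁻²). -/
open MeasureTheory

/-- Univariate Gaussian probability density with mean `μ` and standard deviation `σ`. -/
noncomputable def gaussianPDF (μ σ x : ℝ) : ℝ :=
  (1 / (σ * Real.sqrt (2 * Real.pi))) * Real.exp (-(x - μ) ^ 2 / (2 * σ ^ 2))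

/-! The exponent of a product of Gaussian densities is a quadratic in `x` whose leading
coefficient is `-∑ σᵢ⁻² / 2`; completing the square around the precision-weighted mean shows
that the product is a constant multiple of a Gaussian density, and normalising removes the
constant. -/

lemma gaussianPDF_eq_gaussianPDFReal (μ : ℝ) {σ : ℝ} (hσ : 0 ≤ σ) (x : ℝ) :
    gaussianPDF μ σ x = ProbabilityTheory.gaussianPDFReal μ (σ ^ 2).toNNReal x := by
  rw [gaussianPDF, ProbabilityTheory.gaussianPDFReal, Real.coe_toNNReal _ (sq_nonneg σ),
    Real.sqrt_mul (by positivity) (σ ^ 2), Real.sqrt_sq hσ, one_div, mul_comm σ]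

lemma integral_gaussianPDF (μ : ℝ) {σ : ℝ} (hσ : 0 < σ) : ∫ x, gaussianPDF μ σ x = 1 := by
  simp_rw [gaussianPDF_eq_gaussianPDFReal μ hσ.le]
  refine ProbabilityTheory.integral_gaussianPDFReal_eq_one μ fun h ↦ hσ.ne' ?_
  simpa using congrArg NNReal.toReal h

lemma gaussianPDF_eq_mul_exp (μ σ x : ℝ) :
    gaussianPDF μ σ x =
      (σ * Real.sqrt (2 * Real.pi))⁻¹ * Real.exp (-((σ ^ 2)⁻¹ * (x - μ) ^ 2) / 2) := by
  rw [gaussianPDF, one_div]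
  congr 2
  ring

lemma Finset.sum_mul_sub_sq_eq {ι : Type*} (s : Finset ι) (w a : ι → ℝ) (hw : ∑ i ∈ s, w i ≠ 0)
    (y : ℝ) :
    ∑ i ∈ s, w i * (y - a i) ^ 2 =
      (∑ i ∈ s, w i) * (y - (∑ i ∈ s, w i * a i) / ∑ i ∈ s, w i) ^ 2 +
        ∑ i ∈ s, w i * (a i - (∑ i ∈ s, w i * a i) / ∑ i ∈ s, w i) ^ 2 := by
  set M := (∑ i ∈ s, w i * a i) / ∑ i ∈ s, w i
  have hM : ∑ i ∈ s, w i * (M - a i) = 0 := by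
    simp only [mul_sub, Finset.sum_sub_distrib, ← Finset.sum_mul, M]
    field_simp
    ring
  calc ∑ i ∈ s, w i * (y - a i) ^ 2
      = ∑ i ∈ s, (w i * (y - M) ^ 2 + 2 * (y - M) * (w i * (M - a i)) + w i * (a i - M) ^ 2) :=
        Finset.sum_congr rfl fun i _ ↦ by ring
    _ = (∑ i ∈ s, w i) * (y - M) ^ 2 + 2 * (y - M) * ∑ i ∈ s, w i * (M - a i) +
          ∑ i ∈ s, w i * (a i - M) ^ 2 := by
        rw [Finset.sum_add_distrib, Finset.sum_add_distrib, ← Finset.sum_mul, ← Finset.mul_sum]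
    _ = _ := by rw [hM]; ring

lemma div_integral_eq_of_eq_const_mul {α : Type*} [MeasurableSpace α] {ν : Measure α}
    {f p : α → ℝ} {K : ℝ} (hK : K ≠ 0) (hf : ∀ y, f y = K * p y) (hp : ∫ y, p y ∂ν = 1)
    (x : α) : f x / ∫ y, f y ∂ν = p x := by
  rw [funext hf, integral_const_mul, hp, mul_one, mul_div_cancel_left₀ _ hK]

lemma prod_gaussianPDF_eq_const_mul {ι : Type*} (s : Finset ι) (hs : s.Nonempty) (μ σ : ι → ℝ)
    (hσ : ∀ i ∈ s, 0 < σ i) :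
    ∃ K > 0, ∀ x, ∏ i ∈ s, gaussianPDF (μ i) (σ i) x =
      K * gaussianPDF ((∑ i ∈ s, μ i / σ i ^ 2) / ∑ i ∈ s, (σ i ^ 2)⁻¹)
        (Real.sqrt (1 / ∑ i ∈ s, (σ i ^ 2)⁻¹)) x := by
  set W := ∑ i ∈ s, (σ i ^ 2)⁻¹
  have hW : 0 < W := Finset.sum_pos (fun i hi ↦ by have := hσ i hi; positivity) hs
  have hμ : ∑ i ∈ s, μ i / σ i ^ 2 = ∑ i ∈ s, (σ i ^ 2)⁻¹ * μ i :=
    Finset.sum_congr rfl fun i _ ↦ div_eq_inv_mul _ _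
  set M := (∑ i ∈ s, μ i / σ i ^ 2) / W
  set R := ∑ i ∈ s, (σ i ^ 2)⁻¹ * (μ i - M) ^ 2
  set τ := Real.sqrt (1 / W)
  have hτ : (τ ^ 2)⁻¹ = W := by rw [Real.sq_sqrt (by positivity), one_div, inv_inv]
  have hexponent (x : ℝ) : ∑ i ∈ s, -((σ i ^ 2)⁻¹ * (x - μ i) ^ 2) / 2 =
      -((τ ^ 2)⁻¹ * (x - M) ^ 2) / 2 + -R / 2 := by
    rw [← Finset.sum_div, Finset.sum_neg_distrib, Finset.sum_mul_sub_sq_eq s _ _ hW.ne', hτ, ← hμ]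
    ring
  have hτ_pos : 0 < τ := Real.sqrt_pos.mpr (by positivity)
  have hprod : 0 < ∏ i ∈ s, (σ i * Real.sqrt (2 * Real.pi))⁻¹ :=
    Finset.prod_pos fun i hi ↦ by have := hσ i hi; positivity
  refine ⟨(∏ i ∈ s, (σ i * Real.sqrt (2 * Real.pi))⁻¹) * Real.exp (-R / 2) *
    (τ * Real.sqrt (2 * Real.pi)), by positivity, fun x ↦ ?_⟩
  have : τ * Real.sqrt (2 * Real.pi) ≠ 0 := by positivity
  simp_rw [gaussianPDF_eq_mul_exp]
  rw [Finset.prod_mul_distrib, ← Real.exp_sum, hexponent, Real.exp_add,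
    mul_assoc _ (τ * Real.sqrt (2 * Real.pi)), mul_inv_cancel_left₀ this]
  ring

theorem stmt_2 (n : ℕ) (hn : 1 ≤ n) (μ σ : Fin n → ℝ) (hσ : ∀ i, 0 < σ i) (x : ℝ) :
    (∏ i, gaussianPDF (μ i) (σ i) x) / (∫ y : ℝ, ∏ i, gaussianPDF (μ i) (σ i) y) =
      gaussianPDF ((∑ i, μ i / (σ i) ^ 2) / (∑ i, ((σ i) ^ 2)⁻¹))
        (Real.sqrt (1 / ∑ i, ((σ i) ^ 2)⁻¹)) x := by
  have : NeZero n := ⟨by omega⟩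
  have hW : 0 < ∑ i, ((σ i) ^ 2)⁻¹ :=
    Finset.sum_pos (fun i _ ↦ inv_pos.mpr (pow_pos (hσ i) 2)) Finset.univ_nonempty
  obtain ⟨K, hK, hprod⟩ :=
    prod_gaussianPDF_eq_const_mul Finset.univ Finset.univ_nonempty μ σ fun i _ ↦ hσ i
  exact div_integral_eq_of_eq_const_mul hK.ne' hprod
    (integral_gaussianPDF _ (Real.sqrt_pos.mpr (one_div_pos.mpr hW))) x
end

section
/- Let ψ : ℝ^d → ℝ^d be a diffeomorphism and Φ : ℝ^d → ℝ a continuously differentiable potential such that the system ż = −∇Φ(z) is globally asymptotically stable with equilibrium z_e. Then the natural gradient system ẋ = −G(x)⁻¹ ∇_x Φ(ψ(x)), with G(x) = J_ψ(x)ᵀ J_ψ(x) where J_ψ is the Jacobian of ψ, is globally asymptotically stable with equilibrium ψ⁻¹(z_e). Moreover, its trajectories are exactly the ψ-preimages of trajectories of the original system: if z(t) solves ż = −∇Φ(z) then x(t) = ψ⁻¹(z(t)) solves the natural gradient system. -/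
open Filter Matrix

/-- The gradient of `f : ℝ^d → ℝ` at `x`, in coordinates. -/
noncomputable def gradVec {d : ℕ} (f : (Fin d → ℝ) → ℝ) (x : Fin d → ℝ) : Fin d → ℝ :=
  fun i => fderiv ℝ f x (Pi.single i 1)

/-- The Jacobian matrix of `ψ : ℝ^d → ℝ^d` at `x`. -/
noncomputable def jacMat {d : ℕ} (ψ : (Fin d → ℝ) → (Fin d → ℝ)) (x : Fin d → ℝ) :
    Matrix (Fin d) (Fin d) ℝ :=
  Matrix.of fun i j => fderiv ℝ ψ x (Pi.single j 1) i

/-- The natural gradient vector field `x ↦ −G(x)⁻¹ ∇ₓ Φ(ψ(x))` with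
`G(x) = J_ψ(x)ᵀ J_ψ(x)`. -/
noncomputable def naturalGradField {d : ℕ} (ψ : (Fin d → ℝ) → (Fin d → ℝ))
    (Φ : (Fin d → ℝ) → ℝ) (x : Fin d → ℝ) : Fin d → ℝ :=
  -(((jacMat ψ x)ᵀ * jacMat ψ x)⁻¹.mulVec (gradVec (fun y => Φ (ψ y)) x))

/-!
Writing `z = ψ x`, the natural gradient field is `−G⁻¹ Jᵀ ∇Φ(z) = −J⁻¹ ∇Φ(z)` with `J = J_ψ(x)`,
so along a solution `x(t)` the chain rule gives `ż = J ẋ = −∇Φ(z)`: the diffeomorphism `ψ`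
conjugates the natural gradient flow to the gradient flow of `Φ`. Both the convergence of
solutions and the equilibrium are transported through `ψ⁻¹`, which is continuous.
-/

theorem Matrix.inv_transpose_mul_self_mul_transpose {n R : Type*} [Fintype n] [DecidableEq n]
    [CommRing R] (A : Matrix n n R) (hA : IsUnit A.det) :
    (Aᵀ * A)⁻¹ * Aᵀ = A⁻¹ := by
  have hAt : IsUnit Aᵀ.det := by rwa [det_transpose]
  rw [mul_inv_rev, Matrix.mul_assoc, nonsing_inv_mul _ hAt, Matrix.mul_one]

section Calculus

variable {d : ℕ}

theorem jacMat_eq_toMatrix' (ψ : (Fin d → ℝ) → (Fin d → ℝ)) (x : Fin d → ℝ) :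
    jacMat ψ x = LinearMap.toMatrix' (fderiv ℝ ψ x : (Fin d → ℝ) →ₗ[ℝ] (Fin d → ℝ)) := by
  ext i j
  rfl

theorem jacMat_mulVec (ψ : (Fin d → ℝ) → (Fin d → ℝ)) (x v : Fin d → ℝ) :
    jacMat ψ x *ᵥ v = fderiv ℝ ψ x v := by
  rw [jacMat_eq_toMatrix', LinearMap.toMatrix'_mulVec]
  rfl

theorem fderiv_apply_eq_gradVec_dotProduct (f : (Fin d → ℝ) → ℝ) (x v : Fin d → ℝ) :
    fderiv ℝ f x v = gradVec f x ⬝ᵥ v := by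
  conv_lhs => rw [← Finset.univ_sum_single v]
  simp only [map_sum, dotProduct, gradVec]
  refine Finset.sum_congr rfl fun i _ => ?_
  have hsingle : Pi.single i (v i) = v i • Pi.single i (1 : ℝ) := by
    rw [← Pi.single_smul, smul_eq_mul, mul_one]
  rw [hsingle, map_smul, smul_eq_mul, mul_comm]

theorem jacMat_fun_id (x : Fin d → ℝ) : jacMat (fun y => y) x = 1 := by
  rw [jacMat_eq_toMatrix', fderiv_fun_id]
  exact LinearMap.toMatrix'_id

theorem jacMat_fun_comp {f g : (Fin d → ℝ) → (Fin d → ℝ)} {x : Fin d → ℝ}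
    (hf : DifferentiableAt ℝ f (g x)) (hg : DifferentiableAt ℝ g x) :
    jacMat (fun y => f (g y)) x = jacMat f (g x) * jacMat g x := by
  rw [jacMat_eq_toMatrix', jacMat_eq_toMatrix', jacMat_eq_toMatrix', fderiv_fun_comp x hf hg]
  exact LinearMap.toMatrix'_comp _ _

theorem gradVec_fun_comp {Φ : (Fin d → ℝ) → ℝ} {ψ : (Fin d → ℝ) → (Fin d → ℝ)} {x : Fin d → ℝ}
    (hΦ : DifferentiableAt ℝ Φ (ψ x)) (hψ : DifferentiableAt ℝ ψ x) :
    gradVec (fun y => Φ (ψ y)) x = (jacMat ψ x)ᵀ *ᵥ gradVec Φ (ψ x) := by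
  ext i
  rw [mulVec_transpose, gradVec, fderiv_fun_comp x hΦ hψ, ContinuousLinearMap.comp_apply,
    fderiv_apply_eq_gradVec_dotProduct, ← jacMat_mulVec, dotProduct_mulVec, dotProduct_single_one]

theorem jacMat_mul_jacMat_of_leftInverse {f g : (Fin d → ℝ) → (Fin d → ℝ)} {z : Fin d → ℝ}
    (hf : DifferentiableAt ℝ f (g z)) (hg : DifferentiableAt ℝ g z)
    (hfg : Function.LeftInverse f g) :
    jacMat f (g z) * jacMat g z = 1 := by
  rw [← jacMat_fun_comp hf hg, show (fun y => f (g y)) = fun y => y from funext hfg,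
    jacMat_fun_id]

end Calculus

section Conjugacy

variable {d : ℕ} {ψ ψinv : (Fin d → ℝ) → (Fin d → ℝ)} {Φ : (Fin d → ℝ) → ℝ}

theorem naturalGradField_eq_neg_inv_mulVec {x : Fin d → ℝ} (hψ : DifferentiableAt ℝ ψ x)
    (hΦ : DifferentiableAt ℝ Φ (ψ x)) (hJ : IsUnit (jacMat ψ x).det) :
    naturalGradField ψ Φ x = -((jacMat ψ x)⁻¹ *ᵥ gradVec Φ (ψ x)) := by
  rw [naturalGradField, gradVec_fun_comp hΦ hψ, mulVec_mulVec,
    inv_transpose_mul_self_mul_transpose _ hJ]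

theorem fderiv_apply_naturalGradField {x : Fin d → ℝ} (hψ : DifferentiableAt ℝ ψ x)
    (hΦ : DifferentiableAt ℝ Φ (ψ x)) (hJ : IsUnit (jacMat ψ x).det) :
    fderiv ℝ ψ x (naturalGradField ψ Φ x) = -gradVec Φ (ψ x) := by
  rw [← jacMat_mulVec, naturalGradField_eq_neg_inv_mulVec hψ hΦ hJ, mulVec_neg, mulVec_mulVec,
    mul_nonsing_inv _ hJ, one_mulVec]

theorem fderiv_inverse_apply_neg_gradVec (hψ : Differentiable ℝ ψ)
    (hψinv : Differentiable ℝ ψinv) (hΦ : Differentiable ℝ Φ)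
    (hright : Function.LeftInverse ψ ψinv) (z : Fin d → ℝ) :
    fderiv ℝ ψinv z (-gradVec Φ z) = naturalGradField ψ Φ (ψinv z) := by
  have hJJinv := jacMat_mul_jacMat_of_leftInverse (hψ (ψinv z)) (hψinv z) hright
  rw [naturalGradField_eq_neg_inv_mulVec (hψ _) (hΦ _) (isUnit_det_of_right_inverse hJJinv),
    inv_eq_right_inv hJJinv, hright, jacMat_mulVec, map_neg]

theorem isUnit_det_jacMat (hψ : Differentiable ℝ ψ) (hψinv : Differentiable ℝ ψinv)
    (hleft : Function.LeftInverse ψinv ψ) (hright : Function.LeftInverse ψ ψinv)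
    (x : Fin d → ℝ) : IsUnit (jacMat ψ x).det := by
  have hJJinv := jacMat_mul_jacMat_of_leftInverse (hψ (ψinv (ψ x))) (hψinv (ψ x)) hright
  rw [hleft] at hJJinv
  exact isUnit_det_of_right_inverse hJJinv

theorem hasDerivAt_comp_of_naturalGradField_flow (hψ : Differentiable ℝ ψ)
    (hψinv : Differentiable ℝ ψinv) (hΦ : Differentiable ℝ Φ)
    (hleft : Function.LeftInverse ψinv ψ) (hright : Function.LeftInverse ψ ψinv)
    {x : ℝ → (Fin d → ℝ)} (hx : ∀ t, HasDerivAt x (naturalGradField ψ Φ (x t)) t) (t : ℝ) :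
    HasDerivAt (fun s => ψ (x s)) (-gradVec Φ (ψ (x t))) t := by
  have h := (hψ (x t)).hasFDerivAt.comp_hasDerivAt t (hx t)
  rwa [fderiv_apply_naturalGradField (hψ _) (hΦ _) (isUnit_det_jacMat hψ hψinv hleft hright _)]
    at h

theorem hasDerivAt_comp_of_gradVec_flow (hψ : Differentiable ℝ ψ)
    (hψinv : Differentiable ℝ ψinv) (hΦ : Differentiable ℝ Φ)
    (hright : Function.LeftInverse ψ ψinv)
    {z : ℝ → (Fin d → ℝ)} (hz : ∀ t, HasDerivAt z (-gradVec Φ (z t)) t) (t : ℝ) :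
    HasDerivAt (fun s => ψinv (z s)) (naturalGradField ψ Φ (ψinv (z t))) t := by
  have h := (hψinv (z t)).hasFDerivAt.comp_hasDerivAt t (hz t)
  rwa [fderiv_inverse_apply_neg_gradVec hψ hψinv hΦ hright] at h

end Conjugacy

theorem stmt_12_general {d : ℕ} (ψ ψinv : (Fin d → ℝ) → (Fin d → ℝ)) (Φ : (Fin d → ℝ) → ℝ)
    -- ψ is a diffeomorphism with inverse ψinv, and its Jacobian is everywhere invertible
    (hψ : ContDiff ℝ 1 ψ) (hψinv : ContDiff ℝ 1 ψinv)
    (hleft : ∀ x, ψinv (ψ x) = x) (hright : ∀ z, ψ (ψinv z) = z)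
    -- Φ is a C¹ potential
    (hΦ : ContDiff ℝ 1 Φ)
    -- the system ż = −∇Φ(z) is globally asymptotically stable with equilibrium z_e
    (ze : Fin d → ℝ) (heq : gradVec Φ ze = 0)
    (hGAS : ∀ z : ℝ → (Fin d → ℝ),
      (∀ t, HasDerivAt z (-(gradVec Φ (z t))) t) → Tendsto z atTop (nhds ze)) :
    -- ψ⁻¹(z_e) is an equilibrium of the natural gradient system
    (naturalGradField ψ Φ (ψinv ze) = 0) ∧
    -- the natural gradient system is globally asymptotically stable with equilibrium ψ⁻¹(z_e)
    (∀ x : ℝ → (Fin d → ℝ),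
      (∀ t, HasDerivAt x (naturalGradField ψ Φ (x t)) t) →
      Tendsto x atTop (nhds (ψinv ze))) ∧
    -- trajectories of the natural gradient system are ψ-preimages of trajectories of ż = −∇Φ(z)
    (∀ z : ℝ → (Fin d → ℝ),
      (∀ t, HasDerivAt z (-(gradVec Φ (z t))) t) →
      ∀ t, HasDerivAt (fun s => ψinv (z s)) (naturalGradField ψ Φ (ψinv (z t))) t) := by
  have hψd := hψ.differentiable one_ne_zero
  have hψinvd := hψinv.differentiable one_ne_zero
  have hΦd := hΦ.differentiable one_ne_zero
  refine ⟨?_, fun x hx => ?_, fun z hz => hasDerivAt_comp_of_gradVec_flow hψd hψinvd hΦd hright hz⟩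
  · rw [← fderiv_inverse_apply_neg_gradVec hψd hψinvd hΦd hright, heq, neg_zero, map_zero]
  · have hψx := hGAS _ (hasDerivAt_comp_of_naturalGradField_flow hψd hψinvd hΦd hleft hright hx)
    simpa only [Function.comp_def, hleft] using (hψinv.continuous.tendsto ze).comp hψx

theorem stmt_12 {d : ℕ} (ψ ψinv : (Fin d → ℝ) → (Fin d → ℝ)) (Φ : (Fin d → ℝ) → ℝ)
    -- ψ is a diffeomorphism with inverse ψinv, and its Jacobian is everywhere invertible
    (hψ : ContDiff ℝ 1 ψ) (hψinv : ContDiff ℝ 1 ψinv)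
    (hleft : ∀ x, ψinv (ψ x) = x) (hright : ∀ z, ψ (ψinv z) = z)
    (hJ : ∀ x, IsUnit (jacMat ψ x).det)
    -- Φ is a C¹ potential
    (hΦ : ContDiff ℝ 1 Φ)
    -- the system ż = −∇Φ(z) is globally asymptotically stable with equilibrium z_e
    (ze : Fin d → ℝ) (heq : gradVec Φ ze = 0)
    (hGAS : ∀ z : ℝ → (Fin d → ℝ),
      (∀ t, HasDerivAt z (-(gradVec Φ (z t))) t) → Tendsto z atTop (nhds ze)) :
    -- ψ⁻¹(z_e) is an equilibrium of the natural gradient system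
    (naturalGradField ψ Φ (ψinv ze) = 0) ∧
    -- the natural gradient system is globally asymptotically stable with equilibrium ψ⁻¹(z_e)
    (∀ x : ℝ → (Fin d → ℝ),
      (∀ t, HasDerivAt x (naturalGradField ψ Φ (x t)) t) →
      Tendsto x atTop (nhds (ψinv ze))) ∧
    -- trajectories of the natural gradient system are ψ-preimages of trajectories of ż = −∇Φ(z)
    (∀ z : ℝ → (Fin d → ℝ),
      (∀ t, HasDerivAt z (-(gradVec Φ (z t))) t) →
      ∀ t, HasDerivAt (fun s => ψinv (z s)) (naturalGradField ψ Φ (ψinv (z t))) t) :=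
  stmt_12_general ψ ψinv Φ hψ hψinv hleft hright hΦ ze heq hGAS
end
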